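/- A continuous map p : E → B has the unique path lifting property (upl) if and only if it has the homotopically unique path lifting property (hupl). -/
import Mathlib


universe u

open scoped unitInterval

/-- `p` has the unique path lifting property (upl). -/
def Upl {E B : Type*} [TopologicalSpace E] [TopologicalSpace B] (p : C(E, B)) : Prop :=
  ∀ α β : C(unitInterval, E), α 0 = β 0 → p.comp α = p.comp β → α = β

/-- `p` has the homotopically unique path lifting property (hupl). -/
def Hupl {E B : Type*} [TopologicalSpace E] [TopologicalSpace B] (p : C(E, B)) : Prop :=
  ∀ α β : C(unitInterval, E), α 0 = β 0 → p.comp α = p.comp β →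
    α.HomotopicRel β {0, 1}

theorem upl_iff_hupl {E B : Type*} [TopologicalSpace E] [TopologicalSpace B]
    (p : C(E, B)) :
    Upl p ↔ Hupl p := by
  constructor
  · intro h α β h0 hp
    rw [h α β h0 hp]
    exact ContinuousMap.HomotopicRel.refl β
  · intro h α β h0 hp
    ext t
    have hm : Continuous (fun s : unitInterval => s * t) := by continuity
    set m : C(unitInterval, unitInterval) := ⟨fun s => s * t, hm⟩ with hmdef
    have h0' : (α.comp m) 0 = (β.comp m) 0 := by
      simp [m, zero_mul, h0]
    have hp' : p.comp (α.comp m) = p.comp (β.comp m) := by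
      rw [← ContinuousMap.comp_assoc, ← ContinuousMap.comp_assoc, hp]
    obtain ⟨H⟩ := h (α.comp m) (β.comp m) h0' hp'
    have h1 : (α.comp m) 1 = (β.comp m) 1 := H.fst_eq_snd (by simp)
    simpa [m, one_mul] using h1
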